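/- arXiv:0909.3069 — 2 statements merged into one kernel-verified Lean document; each statement's English description precedes it below -/
import Mathlib

section
/- (One-dimensional case: recurrence from the ergodic theorem.) Let (Σ, F, λ) be an ergodic probability-measure-preserving dynamical system and let f : Σ → ℤ be integrable with ∫_Σ f dλ = 0, with cocycle {S_n}. Then the cocycle {S_n} is recurrent: for λ-a.e. ξ ∈ Σ there exist infinitely many n ∈ ℕ with S_n(ξ) = 0. -/
/-!
Garsia's maximal ergodic inequality and ergodicity show that for every `ε > 0` the Birkhoff
sums of an integrable real function of mean zero satisfy `|S_n| ≤ ε n + C` a.e., and that a set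
`A` of measure `a > 0` is visited at least `a n / 2 - M` times before time `n`.

Let `A` be the set of points whose cocycle never returns to `0` (Atkinson's argument). If
`F^[m] x` and `F^[n] x` both lie in `A` with `m < n`, then `S_n x - S_m x = S_{n-m} (F^[m] x) ≠ 0`,
so the visit times `k < N` to `A` carry pairwise distinct integers `S_k x` in `[-(εN + C), εN + C]`.
There are at most `2(εN + C) + 1` of them, which contradicts the linear lower bound once
`ε < a / 4`. Hence a.e. point returns to `0`, and since `F` preserves null sets the same holds
along the whole orbit, giving infinitely many returns.
-/

open MeasureTheory Filter Set

section BirkhoffSum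

variable {α : Type*}

theorem partialSups_birkhoffSum_nonneg (F : α → α) (g : α → ℝ) (N : ℕ) (x : α) :
    0 ≤ partialSups (birkhoffSum F g) N x := by
  simpa using le_partialSups_of_le (birkhoffSum F g) (Nat.zero_le N) x

theorem partialSups_birkhoffSum_le (F : α → α) (g : α → ℝ) (N : ℕ) (x : α) :
    partialSups (birkhoffSum F g) N x ≤ 0 ⊔ (g x + partialSups (birkhoffSum F g) N (F x)) := by
  rw [Pi.partialSups_apply, partialSups_le_iff]
  rintro (_ | n) hn
  · simp
  · rw [birkhoffSum_succ']
    refine le_sup_of_le_right (add_le_add_right ?_ _)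
    exact le_partialSups_of_le (birkhoffSum F g) (by omega) (F x)

theorem bddAbove_range_birkhoffSum_apply_iff {G : Type*} [AddCommGroup G] [LinearOrder G]
    [IsOrderedAddMonoid G] (F : α → α) (g : α → G) (x : α) :
    BddAbove (range fun n => birkhoffSum F g n (F x)) ↔
      BddAbove (range fun n => birkhoffSum F g n x) := by
  simp only [bddAbove_def, forall_mem_range]
  constructor
  · rintro ⟨M, hM⟩
    refine ⟨0 ⊔ (g x + M), ?_⟩
    rintro (_ | n)
    · simp
    · rw [birkhoffSum_succ']
      exact le_sup_of_le_right (add_le_add_right (hM n) _)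
  · rintro ⟨M, hM⟩
    refine ⟨M - g x, fun n => ?_⟩
    rw [le_sub_iff_add_le']
    simpa [birkhoffSum_succ'] using hM (n + 1)

theorem injOn_birkhoffSum_of_iterate_mem {M : Type*} [AddCancelCommMonoid M] {F : α → α}
    {f : α → M} {A : Set α} (hA : ∀ y ∈ A, ∀ k, 0 < k → birkhoffSum F f k y ≠ 0) (x : α) :
    InjOn (fun n => birkhoffSum F f n x) {n | F^[n] x ∈ A} := by
  have hlt {m n : ℕ} (hm : F^[m] x ∈ A) (hmn : m < n) :
      birkhoffSum F f m x ≠ birkhoffSum F f n x := by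
    obtain ⟨k, rfl⟩ := Nat.exists_eq_add_of_lt hmn
    rw [add_assoc, birkhoffSum_add, Ne, left_eq_add]
    exact hA _ hm (k + 1) k.succ_pos
  intro m hm n hn heq
  rcases lt_trichotomy m n with hmn | hmn | hmn
  · exact absurd heq (hlt hm hmn)
  · exact hmn
  · exact absurd heq.symm (hlt hn hmn)

theorem Finset.card_le_of_injOn_of_abs_le {ι : Type*} {s : Finset ι} {u : ι → ℤ}
    (hu : InjOn u s) {B : ℕ} (hB : ∀ i ∈ s, |u i| ≤ B) : s.card ≤ 2 * B + 1 := by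
  calc s.card ≤ (Finset.Icc (-B : ℤ) B).card :=
        Finset.card_le_card_of_injOn u (fun i hi => Finset.mem_Icc.2 (abs_le.1 (hB i hi))) hu
    _ = 2 * B + 1 := by simp only [Int.card_Icc]; omega

theorem card_filter_iterate_mem_le {F : α → α} {f : α → ℤ} {A : Set α} [DecidablePred (· ∈ A)]
    (hA : ∀ y ∈ A, ∀ k, 0 < k → birkhoffSum F f k y ≠ 0) {x : α} {ε C : ℝ} (hε : 0 ≤ ε)
    (hC : ∀ n : ℕ, |((birkhoffSum F f n x : ℤ) : ℝ)| ≤ n * ε + C) (N : ℕ) :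
    ({k ∈ Finset.range N | F^[k] x ∈ A}.card : ℝ) ≤ 2 * (N * ε + C) + 3 := by
  have hC0 : 0 ≤ C := by simpa using hC 0
  have hB : ∀ n < N, |birkhoffSum F f n x| ≤ ⌈N * ε + C⌉₊ := fun n hn => by
    have hnN : (n : ℝ) * ε + C ≤ N * ε + C := by gcongr
    exact_mod_cast (hC n).trans (hnN.trans (Nat.le_ceil _))
  have hcard := Finset.card_le_of_injOn_of_abs_le
    ((injOn_birkhoffSum_of_iterate_mem hA x).mono fun _ hk => (Finset.mem_filter.1 hk).2)
    fun k hk => hB k (Finset.mem_range.1 (Finset.mem_filter.1 hk).1)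
  have hceil := Nat.ceil_lt_add_one (show 0 ≤ N * ε + C by positivity)
  have : ({k ∈ Finset.range N | F^[k] x ∈ A}.card : ℝ) ≤ 2 * ⌈N * ε + C⌉₊ + 1 := by
    exact_mod_cast hcard
  linarith

theorem birkhoffSum_indicator_one {R : Type*} [AddCommMonoidWithOne R] (F : α → α) (A : Set α)
    [DecidablePred (· ∈ A)] (n : ℕ) (x : α) :
    birkhoffSum F (A.indicator 1) n x = ({k ∈ Finset.range n | F^[k] x ∈ A}.card : R) := by
  simp only [birkhoffSum, Set.indicator_apply, Pi.one_apply, Finset.natCast_card_filter]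

theorem frequently_birkhoffSum_eq_zero {M : Type*} [AddCommMonoid M] {F : α → α} {f : α → M}
    {x : α} (h : ∀ k, ∃ n, 0 < n ∧ birkhoffSum F f n (F^[k] x) = 0) :
    ∃ᶠ n in atTop, birkhoffSum F f n x = 0 := by
  refine frequently_atTop.2 fun m => ?_
  induction m with
  | zero => exact ⟨0, le_rfl, birkhoffSum_zero F f x⟩
  | succ m ih =>
    obtain ⟨n, hmn, hn⟩ := ih
    obtain ⟨k, hk, hzero⟩ := h n
    exact ⟨n + k, by omega, by rw [birkhoffSum_add, hn, hzero, add_zero]⟩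

end BirkhoffSum

section MaximalErgodic

variable {α : Type*} [MeasurableSpace α] {μ : Measure α} {F : α → α}

theorem measurable_birkhoffSum {M : Type*} [AddCommMonoid M] [MeasurableSpace M]
    [MeasurableAdd₂ M] (hF : Measurable F) {g : α → M} (hg : Measurable g) (n : ℕ) :
    Measurable (birkhoffSum F g n) :=
  Finset.measurable_sum _ fun k _ => hg.comp (hF.iterate k)

theorem integrable_birkhoffSum {E : Type*} [NormedAddCommGroup E] (hF : MeasurePreserving F μ μ)
    {g : α → E} (hg : Integrable g μ) (n : ℕ) : Integrable (birkhoffSum F g n) μ :=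
  integrable_finsetSum _ fun k _ => (hF.iterate k).integrable_comp_of_integrable hg

theorem Measurable.partialSups {β : Type*} [MeasurableSpace β] [Lattice β] [MeasurableSup₂ β]
    {f : ℕ → α → β} (hf : ∀ n, Measurable (f n)) (N : ℕ) : Measurable (partialSups f N) := by
  induction N with
  | zero => simpa using hf 0
  | succ N ih =>
    rw [← Order.succ_eq_add_one, partialSups_succ]
    exact ih.sup (hf (N + 1))

theorem Integrable.partialSups {f : ℕ → α → ℝ} (hf : ∀ n, Integrable (f n) μ) (N : ℕ) :
    Integrable (partialSups f N) μ := by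
  induction N with
  | zero => simpa using hf 0
  | succ N ih =>
    rw [← Order.succ_eq_add_one, partialSups_succ]
    exact ih.sup (hf (N + 1))

/-- Garsia's proof: `φ = max_{n ≤ N} S_n g` satisfies `φ - φ ∘ F ≤ g` where `φ > 0`,
and `φ - φ ∘ F ≤ 0` elsewhere, while `φ - φ ∘ F` has integral zero. -/
theorem setIntegral_partialSups_birkhoffSum_pos_nonneg (hF : MeasurePreserving F μ μ)
    {g : α → ℝ} (hgm : Measurable g) (hgi : Integrable g μ) (N : ℕ) :
    0 ≤ ∫ x in {x | 0 < partialSups (birkhoffSum F g) N x}, g x ∂μ := by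
  set φ := partialSups (birkhoffSum F g) N
  set E := {x | 0 < φ x}
  have hφi : Integrable φ μ := Integrable.partialSups (integrable_birkhoffSum hF hgi) N
  have hφFi : Integrable (fun x => φ (F x)) μ := hF.integrable_comp_of_integrable hφi
  have hE : MeasurableSet E :=
    measurableSet_lt measurable_const
      (Measurable.partialSups (measurable_birkhoffSum hF.measurable hgm) N)
  have hdiff : Integrable (fun x => φ x - φ (F x)) μ := hφi.sub hφFi
  have hle_on_E : ∀ x ∈ E, φ x - φ (F x) ≤ g x := fun x hx => by
    have := partialSups_birkhoffSum_le F g N x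
    have hx : 0 < φ x := hx
    rcases le_sup_iff.1 this with h | h <;> linarith
  have hle_off_E : ∀ x ∈ Eᶜ, φ x - φ (F x) ≤ 0 := fun x hx => by
    have hx : φ x ≤ 0 := not_lt.1 hx
    linarith [partialSups_birkhoffSum_nonneg F g N (F x)]
  have hinv : ∫ x, φ (F x) ∂μ = ∫ x, φ x ∂μ := by
    have hφm : AEStronglyMeasurable φ (Measure.map F μ) := by
      rw [hF.map_eq]; exact hφi.aestronglyMeasurable
    rw [← integral_map hF.aemeasurable hφm, hF.map_eq]
  calc 0 = ∫ x, φ x - φ (F x) ∂μ := by rw [integral_sub hφi hφFi, hinv, sub_self]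
    _ = (∫ x in E, φ x - φ (F x) ∂μ) + ∫ x in Eᶜ, φ x - φ (F x) ∂μ :=
        (integral_add_compl hE hdiff).symm
    _ ≤ (∫ x in E, φ x - φ (F x) ∂μ) + 0 := by
        gcongr
        exact setIntegral_nonpos hE.compl hle_off_E
    _ ≤ ∫ x in E, g x ∂μ := by
        rw [add_zero]
        exact setIntegral_mono_on hdiff.integrableOn hgi.integrableOn hE hle_on_E

theorem maximal_ergodic_inequality (hF : MeasurePreserving F μ μ) {g : α → ℝ}
    (hgm : Measurable g) (hgi : Integrable g μ) :
    0 ≤ ∫ x in {x | ∃ n, 0 < birkhoffSum F g n x}, g x ∂μ := by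
  have hunion : ⋃ N, {x | 0 < partialSups (birkhoffSum F g) N x} =
      {x | ∃ n, 0 < birkhoffSum F g n x} := by
    ext x
    simp only [mem_iUnion, mem_ofPred_eq, Pi.partialSups_apply, ← not_le, partialSups_le_iff]
    push Not
    exact ⟨fun ⟨_, n, _, hn⟩ => ⟨n, hn⟩, fun ⟨n, hn⟩ => ⟨n, n, le_rfl, hn⟩⟩
  have hmeas (N : ℕ) : MeasurableSet {x | 0 < partialSups (birkhoffSum F g) N x} :=
    measurableSet_lt measurable_const
      (Measurable.partialSups (measurable_birkhoffSum hF.measurable hgm) N)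
  have hmono : Monotone fun N => {x | 0 < partialSups (birkhoffSum F g) N x} :=
    fun _ _ hNM =>
    ofPred_subset_ofPred.2 fun x hx => hx.trans_le (Pi.le_def.1 (partialSups_monotone _ hNM) x)
  have hlim := tendsto_setIntegral_of_monotone hmeas hmono hgi.integrableOn
  rw [hunion] at hlim
  exact ge_of_tendsto' hlim (setIntegral_partialSups_birkhoffSum_pos_nonneg hF hgm hgi)

end MaximalErgodic

section Ergodic

variable {α : Type*} [MeasurableSpace α] {μ : Measure α} {F : α → α} {g : α → ℝ}

theorem Ergodic.ae_bddAbove_birkhoffSum_of_integral_neg (hF : Ergodic F μ) (hgm : Measurable g)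
    (hgi : Integrable g μ) (hneg : ∫ x, g x ∂μ < 0) :
    ∀ᵐ x ∂μ, BddAbove (range fun n => birkhoffSum F g n x) := by
  set J := {x | ¬BddAbove (range fun n => birkhoffSum F g n x)}
  have hJ : MeasurableSet J :=
    (measurableSet_bddAbove_range (measurable_birkhoffSum hF.measurable hgm)).compl
  have hJinv : F ⁻¹' J = J := by
    ext x
    simp only [J, mem_preimage, mem_ofPred_eq, bddAbove_range_birkhoffSum_apply_iff]
  rcases hF.ae_empty_or_univ hJ hJinv with hJ0 | hJ1
  · filter_upwards [measure_eq_zero_iff_ae_notMem.1 (ae_eq_empty.1 hJ0)] with x hx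
    simpa [J] using hx
  · have hJE : J ⊆ {x | ∃ n, 0 < birkhoffSum F g n x} := fun x hx => by
      simpa using not_bddAbove_iff.1 hx 0
    have hE : ∀ᵐ x ∂μ, x ∈ {x | ∃ n, 0 < birkhoffSum F g n x} :=
      hJ1.mem_iff.mono fun x hx => hJE (hx.2 trivial)
    have := maximal_ergodic_inequality hF.toMeasurePreserving hgm hgi
    rw [Measure.restrict_eq_self_of_ae_mem hE] at this
    exact absurd hneg this.not_gt

theorem Ergodic.ae_bddAbove_birkhoffSum_sub [IsProbabilityMeasure μ] (hF : Ergodic F μ)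
    (hgm : Measurable g) (hgi : Integrable g μ) {c : ℝ} (hc : ∫ x, g x ∂μ < c) :
    ∀ᵐ x ∂μ, BddAbove (range fun n => birkhoffSum F g n x - n * c) := by
  have hsub (n : ℕ) (x : α) :
      birkhoffSum F (fun y => g y - c) n x = birkhoffSum F g n x - n * c := by
    simp [birkhoffSum, Finset.sum_sub_distrib]
  simpa only [hsub] using hF.ae_bddAbove_birkhoffSum_of_integral_neg (hgm.sub_const c)
    (hgi.sub (integrable_const c)) (by simpa [integral_sub hgi (integrable_const c)] using hc)

theorem Ergodic.ae_bddBelow_birkhoffSum_sub [IsProbabilityMeasure μ] (hF : Ergodic F μ)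
    (hgm : Measurable g) (hgi : Integrable g μ) {c : ℝ} (hc : c < ∫ x, g x ∂μ) :
    ∀ᵐ x ∂μ, BddBelow (range fun n => birkhoffSum F g n x - n * c) := by
  filter_upwards [hF.ae_bddAbove_birkhoffSum_sub hgm.neg hgi.neg (c := -c)
    (by simp only [Pi.neg_apply, integral_neg]; linarith)] with x ⟨M, hM⟩
  refine ⟨-M, forall_mem_range.2 fun n => ?_⟩
  have := hM (mem_range_self n)
  simp only [birkhoffSum_neg] at this
  linarith

theorem Ergodic.ae_abs_birkhoffSum_le [IsProbabilityMeasure μ] (hF : Ergodic F μ)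
    (hgm : Measurable g) (hgi : Integrable g μ) (hmean : ∫ x, g x ∂μ = 0) {ε : ℝ} (hε : 0 < ε) :
    ∀ᵐ x ∂μ, ∃ C, ∀ n : ℕ, |birkhoffSum F g n x| ≤ n * ε + C := by
  filter_upwards [hF.ae_bddAbove_birkhoffSum_sub hgm hgi (hmean ▸ hε),
    hF.ae_bddBelow_birkhoffSum_sub hgm hgi (c := -ε) (by linarith)] with x ⟨M, hM⟩ ⟨M', hM'⟩
  refine ⟨M ⊔ -M', fun n => abs_le.2 ⟨?_, ?_⟩⟩
  · have := hM' (mem_range_self n)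
    linarith [le_sup_right (a := M) (b := -M')]
  · have := hM (mem_range_self n)
    linarith [le_sup_left (a := M) (b := -M')]

theorem Ergodic.ae_exists_birkhoffSum_eq_zero [IsProbabilityMeasure μ] (hF : Ergodic F μ)
    {f : α → ℤ} (hf : Measurable f)
    (hint : Integrable (fun x => (f x : ℝ)) μ) (hmean : ∫ x, (f x : ℝ) ∂μ = 0) :
    ∀ᵐ x ∂μ, ∃ n, 0 < n ∧ birkhoffSum F f n x = 0 := by
  set A := {x | ∀ n, 0 < n → birkhoffSum F f n x ≠ 0}
  have hA : MeasurableSet A := by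
    have hS := measurable_birkhoffSum hF.measurable hf
    measurability
  suffices μ A = 0 by
    filter_upwards [measure_eq_zero_iff_ae_notMem.1 this] with x hx
    simpa [A] using hx
  by_contra hA0
  classical
  set a := μ.real A
  have ha : 0 < a := ENNReal.toReal_pos hA0 (measure_ne_top μ A)
  obtain ⟨x, ⟨C, hC⟩, M, hM⟩ := ((hF.ae_abs_birkhoffSum_le (g := fun x => (f x : ℝ))
    (measurable_from_top.comp hf) hint hmean (ε := a / 8) (by positivity)).and
    (hF.ae_bddBelow_birkhoffSum_sub (g := A.indicator 1) (measurable_const.indicator hA)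
    ((integrable_const 1).indicator hA) (c := a / 2)
    (by simp [integral_indicator hA, a]; linarith))).exists
  have hcast (n : ℕ) : ((birkhoffSum F f n x : ℤ) : ℝ) = birkhoffSum F (fun y => (f y : ℝ)) n x :=
    map_birkhoffSum (Int.castAddHom ℝ) F f n x
  simp only [← hcast] at hC
  obtain ⟨N, hN⟩ := exists_nat_gt ((2 * C + 3 - M) / (a / 4))
  rw [div_lt_iff₀ (by positivity)] at hN
  have hvisits := hM (mem_range_self N)
  rw [birkhoffSum_indicator_one] at hvisits
  linarith [card_filter_iterate_mem_le (A := A) (fun y hy => hy) (by positivity) hC N]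

end Ergodic

theorem MeasureTheory.Measure.QuasiMeasurePreserving.ae_frequently_birkhoffSum_eq_zero
    {α M : Type*} [MeasurableSpace α] [AddCommMonoid M] {μ : Measure α} {F : α → α} {f : α → M}
    (hF : QuasiMeasurePreserving F μ μ) (h : ∀ᵐ x ∂μ, ∃ n, 0 < n ∧ birkhoffSum F f n x = 0) :
    ∀ᵐ x ∂μ, ∃ᶠ n in atTop, birkhoffSum F f n x = 0 :=
  (ae_all_iff.2 fun k => (hF.iterate k).ae h).mono fun _ hx => frequently_birkhoffSum_eq_zero hx

/-- **One-dimensional case: recurrence from the ergodic theorem.** Let `(α, F, μ)` be an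
ergodic probability-measure-preserving dynamical system and `f : α → ℤ` integrable with
`∫ f dμ = 0`, with cocycle `S n ξ = ∑_{k<n} f (F^k ξ)`. Then the cocycle is recurrent:
for a.e. `ξ` there are infinitely many `n` with `S n ξ = 0`. -/
theorem cocycle_recurrent_of_ergodic_zero_mean
    {α : Type*} [MeasurableSpace α] (μ : Measure α) [IsProbabilityMeasure μ]
    (F : α → α) (hF : Ergodic F μ)
    (f : α → ℤ) (hf : Measurable f)
    (hint : Integrable (fun ξ => (f ξ : ℝ)) μ)
    (hmean : ∫ ξ, (f ξ : ℝ) ∂μ = 0)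
    (S : ℕ → α → ℤ)
    (hS : ∀ n ξ, S n ξ = ∑ k ∈ Finset.range n, f (F^[k] ξ)) :
    ∀ᵐ ξ ∂μ, ∃ᶠ n in atTop, S n ξ = 0 := by
  obtain rfl : S = birkhoffSum F f := funext fun n => funext (hS n)
  exact hF.toMeasurePreserving.quasiMeasurePreserving.ae_frequently_birkhoffSum_eq_zero
    (hF.ae_exists_birkhoffSum_eq_zero hf hint hmean)
end

section
/- (Quenched recurrence from cocycle recurrence, abstract form of Proposition 5.) Let (X, μ) be a probability space, Ω a measurable space, and Π a probability measure on Ω^ℤ. Let R : Ω × X → X and e : X × Ω → ℤ be measurable. Define Σ := X × Ω^ℤ, λ := μ × Π, and F : Σ → Σ by F(x, ℓ) := (R(ℓ_0, x), σ^{e(x, ℓ_0)} ℓ), where σ is the left shift on Ω^ℤ and ℓ_0 is the 0th component of ℓ; assume F is measurable. For each fixed ℓ ∈ Ω^ℤ define the fiber skew map U_ℓ : X × ℤ → X × ℤ by U_ℓ(x, k) := (R(ℓ_k, x), k + e(x, ℓ_k)). Suppose the cocycle {S_n} of the function (x, ℓ) ↦ e(x, ℓ_0) over (Σ, F, λ)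 is recurrent, i.e., for λ-a.e. (x, ℓ) there exist infinitely many n with S_n(x, ℓ) = 0. Then for Π-a.e. ℓ ∈ Ω^ℤ, for μ-a.e. x ∈ X, there exist infinitely many n ∈ ℕ such that the second coordinate of U_ℓ^n(x, 0) equals 0. -/
open MeasureTheory Filter

/-- **Quenched recurrence from cocycle recurrence (abstract Proposition 5).** Let `(X, μ)` be
a probability space, `Ω` a measurable space and `P` a probability measure on `Ω^ℤ`. Let
`R : Ω × X → X` and `e : X × Ω → ℤ` be measurable, let `F(x,ℓ) = (R(ℓ₀, x), σ^{e(x,ℓ₀)} ℓ)`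
on `Σ = X × Ω^ℤ` (with `σ` the left shift), assumed measurable, and for each `ℓ` let
`U_ℓ(x,k) = (R(ℓ_k, x), k + e(x, ℓ_k))`. If the cocycle `S` of `(x,ℓ) ↦ e(x, ℓ₀)` over
`(Σ, F, μ × P)` is recurrent, then for `P`-a.e. `ℓ`, for `μ`-a.e. `x`, there are infinitely
many `n` with the second coordinate of `U_ℓ^n(x,0)` equal to `0`. -/
theorem quenched_recurrence_of_cocycle_recurrence
    {X : Type*} [MeasurableSpace X] (μ : Measure X) [IsProbabilityMeasure μ]
    {Ω : Type*} [MeasurableSpace Ω] (P : Measure (ℤ → Ω)) [IsProbabilityMeasure P]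
    (R : Ω → X → X) (e : X → Ω → ℤ)
    (hR : Measurable (fun p : Ω × X => R p.1 p.2))
    (he : Measurable (fun p : X × Ω => e p.1 p.2))
    (F : X × (ℤ → Ω) → X × (ℤ → Ω))
    (hFdef : ∀ (x : X) (ℓ : ℤ → Ω),
      F (x, ℓ) = (R (ℓ 0) x, fun n => ℓ (n + e x (ℓ 0))))
    (hFmeas : Measurable F)
    (U : (ℤ → Ω) → X × ℤ → X × ℤ)
    (hUdef : ∀ (ℓ : ℤ → Ω) (x : X) (k : ℤ),
      U ℓ (x, k) = (R (ℓ k) x, k + e x (ℓ k)))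
    (S : ℕ → X × (ℤ → Ω) → ℤ)
    (hS : ∀ (n : ℕ) (p : X × (ℤ → Ω)),
      S n p = ∑ k ∈ Finset.range n, e (F^[k] p).1 ((F^[k] p).2 0))
    (hrec : ∀ᵐ p ∂(μ.prod P), ∃ᶠ n in atTop, S n p = 0) :
    ∀ᵐ ℓ ∂P, ∀ᵐ x ∂μ, ∃ᶠ n in atTop, ((U ℓ)^[n] (x, 0)).2 = 0 := by
  -- Key identity: the skew-product orbit reads off the cocycle.
  have key : ∀ (ℓ : ℤ → Ω) (x : X) (n : ℕ),
      (U ℓ)^[n] (x, 0) = ((F^[n] (x, ℓ)).1, S n (x, ℓ)) ∧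
      (F^[n] (x, ℓ)).2 = fun j => ℓ (j + S n (x, ℓ)) := by
    intro ℓ x n
    induction n with
    | zero =>
      simp [hS]
    | succ n ih =>
      obtain ⟨h1, h2⟩ := ih
      set y := (F^[n] (x, ℓ)).1 with hy
      have hSn : S (n + 1) (x, ℓ) = S n (x, ℓ) + e y (ℓ (S n (x, ℓ))) := by
        have h0 : (F^[n] (x, ℓ)).2 0 = ℓ (0 + S n (x, ℓ)) := by rw [h2]
        rw [hS (n+1), Finset.sum_range_succ, ← hS n, h0, zero_add]
      have hFn : F^[n] (x, ℓ) = (y, fun j => ℓ (j + S n (x, ℓ))) := by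
        rw [Prod.ext_iff]; exact ⟨rfl, h2⟩
      have hFstep : F^[n + 1] (x, ℓ) =
          (R (ℓ (S n (x, ℓ))) y, fun j => ℓ (j + e y (ℓ (S n (x, ℓ))) + S n (x, ℓ))) := by
        rw [Function.iterate_succ_apply', hFn, hFdef]
        simp [zero_add]
      constructor
      · rw [Function.iterate_succ_apply', h1, hUdef, hFstep, hSn]
      · rw [hFstep, hSn]
        funext j
        simp [add_assoc]
        ring_nf
  -- Transfer the a.e. statement through swap and apply Fubini.
  have hswap : ∀ᵐ q ∂(P.prod μ), ∃ᶠ n in atTop, S n (Prod.swap q) = 0 :=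
    (Measure.measurePreserving_swap (μ := P) (ν := μ)).quasiMeasurePreserving.ae hrec
  have := Measure.ae_ae_of_ae_prod hswap
  filter_upwards [this] with ℓ hℓ
  filter_upwards [hℓ] with x hx
  exact hx.mono fun n hn => by rw [(key ℓ x n).1]; exact hn
end
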